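/- arXiv:2401.11247 — 2 statements merged into one kernel-verified Lean document; each statement's English description precedes it below -/
import Mathlib

section
/- Let g : ℝ → ℝ be continuous, let γ be a real number, and for each natural number j define z_j(t) = ∫_0^t (t−s)^j · e^(−γ·(t−s)) · g(s) ds. Then for every t ≥ 0: z_0 is differentiable at t with derivative ż_0(t) = −γ·z_0(t) + g(t), and for every j ≥ 1, z_j is differentiable at t with derivative ż_j(t) = −γ·z_j(t) + j·z_{j−1}(t). -/
open Finset

noncomputable def Aux (γ : ℝ) (g : ℝ → ℝ) (k : ℕ) (t : ℝ) : ℝ :=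
  ∫ s in (0:ℝ)..t, (-s)^k * Real.exp (γ * s) * g s

lemma hasDerivAt_Aux (γ : ℝ) {g : ℝ → ℝ} (hg : Continuous g) (k : ℕ) (t : ℝ) :
    HasDerivAt (Aux γ g k) ((-t)^k * Real.exp (γ * t) * g t) t := by
  have hc : Continuous fun s : ℝ => (-s)^k * Real.exp (γ * s) * g s := by continuity
  exact intervalIntegral.integral_hasDerivAt_right (hc.intervalIntegrable _ _)
    (hc.stronglyMeasurable.stronglyMeasurableAtFilter) hc.continuousAt

lemma z_eq (γ : ℝ) {g : ℝ → ℝ} (hg : Continuous g) (j : ℕ) (t : ℝ) :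
    (∫ s in (0:ℝ)..t, (t - s)^j * Real.exp (-γ * (t - s)) * g s)
      = ∑ k ∈ Finset.range (j+1),
        (j.choose k : ℝ) * t^(j-k) * Real.exp (-γ * t) * Aux γ g k t := by
  have hterm : ∀ k ∈ Finset.range (j+1),
      (j.choose k : ℝ) * t^(j-k) * Real.exp (-γ * t) * Aux γ g k t
      = ∫ s in (0:ℝ)..t, (j.choose k : ℝ) * t^(j-k) * Real.exp (-γ * t) *
          ((-s)^k * Real.exp (γ * s) * g s) := by
    intro k _
    rw [Aux, ← intervalIntegral.integral_const_mul]
  rw [Finset.sum_congr rfl hterm, ← intervalIntegral.integral_finset_sum]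
  · apply intervalIntegral.integral_congr
    intro s _
    have h1 : (t - s)^j = ∑ k ∈ Finset.range (j+1), (-s)^k * t^(j-k) * (j.choose k : ℝ) := by
      rw [← add_pow]; ring_nf
    have h2 : Real.exp (-γ * (t - s)) = Real.exp (-γ * t) * Real.exp (γ * s) := by
      rw [← Real.exp_add]; ring_nf
    simp only []

    rw [h1, h2, Finset.sum_mul, Finset.sum_mul]
    exact Finset.sum_congr rfl fun k _ => by ring
  · intro k _
    exact (continuous_const.mul ((by continuity : Continuous fun s:ℝ => (-s)^k * Real.exp (γ*s) * g s))).intervalIntegrable _ _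

lemma hasDerivAt_F (γ : ℝ) {g : ℝ → ℝ} (hg : Continuous g) (j : ℕ) (t : ℝ) :
    HasDerivAt (fun t => ∑ k ∈ Finset.range (j+1),
        (j.choose k : ℝ) * t^(j-k) * Real.exp (-γ * t) * Aux γ g k t)
      (∑ k ∈ Finset.range (j+1), (j.choose k : ℝ) *
        (((j-k : ℕ) : ℝ) * t^(j-k-1) * Real.exp (-γ*t) * Aux γ g k t
         + t^(j-k) * (-γ * Real.exp (-γ*t)) * Aux γ g k t
         + t^(j-k) * Real.exp (-γ*t) * ((-t)^k * Real.exp (γ*t) * g t))) t := by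
  apply HasDerivAt.fun_sum
  intro k hk
  have h1 := hasDerivAt_pow (j-k) t
  have h2 : HasDerivAt (fun t : ℝ => Real.exp (-γ * t)) (Real.exp (-γ*t) * (-γ * 1)) t :=
    ((hasDerivAt_id t).const_mul (-γ)).exp
  have h3 := hasDerivAt_Aux γ hg k t
  have h := ((h1.const_mul ((j.choose k : ℝ))).fun_mul h2).fun_mul h3
  convert h using 1
  · rfl
  ring

lemma choose_sub_eq (m k : ℕ) : (m+1).choose k * (m+1-k) = (m+1) * m.choose k := by
  rw [← Nat.choose_succ_right_eq, ← Nat.add_one_mul_choose_eq]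


/-- The auxiliary variables `z_j(t) = ∫_0^t (t-s)^j e^(-γ(t-s)) g(s) ds` satisfy the
ordinary differential equations `ż_0 = -γ z_0 + g` and `ż_j = -γ z_j + j z_{j-1}`
for `j ≥ 1`. -/
theorem auxiliary_variables_ode (g : ℝ → ℝ) (hg : Continuous g) (γ : ℝ)
    (z : ℕ → ℝ → ℝ)
    (hz : ∀ (j : ℕ) (t : ℝ),
      z j t = ∫ s in (0 : ℝ)..t, (t - s) ^ j * Real.exp (-γ * (t - s)) * g s) :
    ∀ t : ℝ, 0 ≤ t →
      HasDerivAt (z 0) (-γ * z 0 t + g t) t ∧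
      ∀ j : ℕ, 1 ≤ j → HasDerivAt (z j) (-γ * z j t + (j : ℝ) * z (j - 1) t) t := by
  have hzF : ∀ j, z j = fun t => ∑ k ∈ Finset.range (j+1),
      (j.choose k : ℝ) * t^(j-k) * Real.exp (-γ * t) * Aux γ g k t :=
    fun j => funext fun t => (hz j t).trans (z_eq γ hg j t)
  have hE : ∀ t : ℝ, Real.exp (-γ*t) * Real.exp (γ*t) = 1 := by
    intro t
    rw [← Real.exp_add, show -γ*t + γ*t = 0 by ring, Real.exp_zero]
  intro t ht
  constructor
  · rw [hzF 0]
    convert hasDerivAt_F γ hg 0 t using 1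
    simp only [hzF, zero_add, Finset.sum_range_one, Nat.choose_self, Nat.cast_one]
    linear_combination (-(g t)) * hE t
  · intro j hj
    obtain ⟨m, rfl⟩ : ∃ m, j = m + 1 := ⟨j - 1, by omega⟩
    rw [hzF (m+1)]
    convert hasDerivAt_F γ hg (m+1) t using 1
    simp only [hzF, Nat.add_sub_cancel]
    -- split sum of three parts
    simp only [mul_add, Finset.sum_add_distrib]
    have hS2 : ∑ k ∈ Finset.range (m+1+1), ((m+1).choose k : ℝ) *
        (t^(m+1-k) * (-γ * Real.exp (-γ*t)) * Aux γ g k t)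
        = -γ * ∑ k ∈ Finset.range (m+1+1),
            ((m+1).choose k : ℝ) * t^(m+1-k) * Real.exp (-γ*t) * Aux γ g k t := by
      rw [Finset.mul_sum]
      exact Finset.sum_congr rfl fun k _ => by ring
    have hS3 : ∑ k ∈ Finset.range (m+1+1), ((m+1).choose k : ℝ) *
        (t^(m+1-k) * Real.exp (-γ*t) * ((-t)^k * Real.exp (γ*t) * g t)) = 0 := by
      have : ∑ k ∈ Finset.range (m+1+1), ((m+1).choose k : ℝ) *
          (t^(m+1-k) * Real.exp (-γ*t) * ((-t)^k * Real.exp (γ*t) * g t))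
          = (∑ k ∈ Finset.range (m+1+1), (-t)^k * t^(m+1-k) * ((m+1).choose k : ℝ)) *
            ((Real.exp (-γ*t) * Real.exp (γ*t)) * g t) := by
        rw [Finset.sum_mul]
        exact Finset.sum_congr rfl fun k _ => by ring
      rw [this, ← add_pow, hE, show -t + t = 0 by ring, zero_pow (by omega : m+1 ≠ 0)]
      ring
    have hS1 : ∑ k ∈ Finset.range (m+1+1), ((m+1).choose k : ℝ) *
        (((m+1-k : ℕ) : ℝ) * t^(m+1-k-1) * Real.exp (-γ*t) * Aux γ g k t)
        = ((m:ℝ)+1) * ∑ k ∈ Finset.range (m+1),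
            (m.choose k : ℝ) * t^(m-k) * Real.exp (-γ*t) * Aux γ g k t := by
      rw [Finset.sum_range_succ, Nat.sub_self]
      simp only [Nat.cast_zero, zero_mul, mul_zero, add_zero]
      rw [Finset.mul_sum]
      refine Finset.sum_congr rfl fun k hk => ?_
      have hc : ((m+1).choose k : ℝ) * ((m+1-k : ℕ) : ℝ) = ((m:ℝ)+1) * (m.choose k : ℝ) := by
        rw [← Nat.cast_mul, choose_sub_eq]
        push_cast; ring
      have he : m+1-k-1 = m-k := by omega
      rw [he]
      calc ((m+1).choose k : ℝ) * (((m+1-k : ℕ) : ℝ) * t^(m-k) * Real.exp (-γ*t) * Aux γ g k t)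
          = (((m+1).choose k : ℝ) * ((m+1-k : ℕ) : ℝ)) * (t^(m-k) * Real.exp (-γ*t) * Aux γ g k t) := by ring
        _ = _ := by rw [hc]; ring
    rw [hS1, hS2, hS3, add_zero]
    push_cast
    ring
end

section
/- Let V_max, K_m, V, A₀ be positive reals, let t₀ ≤ t₁ be reals, and let A : ℝ → ℝ satisfy A(t₀) = A₀, A(t) > 0 for all t ∈ [t₀, t₁], and A'(t) = −V_max·A(t)/(K_m + A(t)/V) for all t ∈ [t₀, t₁] (in the sense of HasDerivAt). Then for every t ∈ [t₀, t₁], (K_m/V_max)·(ln A(t) − ln A₀) + (A(t) − A₀)/(V_max·V) = −(t − t₀); equivalently, A(t) = A₀ · exp( −(A(t) − A₀)/(K_m·V) − (V_max/K_m)·(t − t₀) ). -/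
/-!
The quantity `(K_m/V_max) ln A + A/(V_max V) + t` is a first integral of
`Ȧ = -V_max A/(K_m + A/V)`: its derivative is `Ȧ (K_m + A/V)/(V_max A) + 1 = 0`. Comparing its
values at `t₀` and `t` gives the logarithmic form, and exponentiating gives the implicit form.
-/

open Real Set

theorem eq_on_Icc_of_hasDerivAt_zero {E : Type*} [NormedAddCommGroup E] [NormedSpace ℝ E]
    {f : ℝ → E} {a b : ℝ} (hf : ∀ x ∈ Icc a b, HasDerivAt f 0 x) :
    ∀ x ∈ Icc a b, f x = f a :=
  constant_of_has_deriv_right_zero (fun x hx => (hf x hx).continuousAt.continuousWithinAt)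
    fun x hx => (hf x (Ico_subset_Icc_self hx)).hasDerivWithinAt

noncomputable def michaelisMentenFirstIntegral (Vmax Km V : ℝ) (A : ℝ → ℝ) (t : ℝ) : ℝ :=
  Km / Vmax * log (A t) + A t / (Vmax * V) + t

theorem hasDerivAt_michaelisMentenFirstIntegral {Vmax Km V : ℝ} {A : ℝ → ℝ} {t : ℝ}
    (hVmax : Vmax ≠ 0) (hA : A t ≠ 0) (hden : Km + A t / V ≠ 0)
    (hode : HasDerivAt A (-(Vmax * A t) / (Km + A t / V)) t) :
    HasDerivAt (michaelisMentenFirstIntegral Vmax Km V A) 0 t := by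
  set A' := -(Vmax * A t) / (Km + A t / V)
  have hderiv : HasDerivAt (michaelisMentenFirstIntegral Vmax Km V A)
      (Km / Vmax * (A' / A t) + A' / (Vmax * V) + 1) t :=
    (((hode.log hA).const_mul (Km / Vmax)).add (hode.div_const (Vmax * V))).add (hasDerivAt_id t)
  refine hderiv.congr_deriv ?_
  calc Km / Vmax * (A' / A t) + A' / (Vmax * V) + 1
      = A' * (Km + A t / V) / (Vmax * A t) + 1 := by field_simp
    _ = -(Vmax * A t) / (Vmax * A t) + 1 := by rw [div_mul_cancel₀ _ hden]
    _ = 0 := by rw [neg_div, div_self (mul_ne_zero hVmax hA)]; ring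

theorem eq_mul_exp_of_log_first_integral {Vmax Km V a a₀ τ : ℝ} (hVmax : Vmax ≠ 0)
    (hKm : Km ≠ 0) (ha : 0 < a) (ha₀ : 0 < a₀)
    (h : Km / Vmax * (log a - log a₀) + (a - a₀) / (Vmax * V) = -τ) :
    a = a₀ * exp (-(a - a₀) / (Km * V) - Vmax / Km * τ) := by
  have hexponent : -(a - a₀) / (Km * V) - Vmax / Km * τ = log a - log a₀ := by
    obtain rfl : τ = -(Km / Vmax * (log a - log a₀) + (a - a₀) / (Vmax * V)) := by linarith
    field_simp
    ring
  rw [hexponent, exp_sub, exp_log ha, exp_log ha₀]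
  field_simp

theorem drug_amount_implicit_solution_general (Vmax Km V A₀ : ℝ)
    (hVmax : 0 < Vmax) (hKm : 0 < Km) (hV : 0 < V)
    (t₀ t₁ : ℝ) (A : ℝ → ℝ)
    (hinit : A t₀ = A₀)
    (hpos : ∀ t ∈ Set.Icc t₀ t₁, 0 < A t)
    (hode : ∀ t ∈ Set.Icc t₀ t₁,
      HasDerivAt A (-(Vmax * A t) / (Km + A t / V)) t) :
    ∀ t ∈ Set.Icc t₀ t₁,
      (Km / Vmax) * (Real.log (A t) - Real.log A₀) + (A t - A₀) / (Vmax * V) =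
          -(t - t₀) ∧
      A t = A₀ * Real.exp (-(A t - A₀) / (Km * V) - (Vmax / Km) * (t - t₀)) := by
  intro t ht
  have hconst : ∀ s ∈ Icc t₀ t₁, michaelisMentenFirstIntegral Vmax Km V A s =
      michaelisMentenFirstIntegral Vmax Km V A t₀ :=
    eq_on_Icc_of_hasDerivAt_zero fun s hs =>
      have hAs := hpos s hs
      hasDerivAt_michaelisMentenFirstIntegral hVmax.ne' hAs.ne' (by positivity) (hode s hs)
  have hlog : Km / Vmax * (log (A t) - log A₀) + (A t - A₀) / (Vmax * V) = -(t - t₀) := by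
    have := hconst t ht
    simp only [michaelisMentenFirstIntegral, hinit] at this
    linear_combination this
  have hA₀ : 0 < A₀ := hinit ▸ hpos t₀ ⟨le_rfl, ht.1.trans ht.2⟩
  exact ⟨hlog, eq_mul_exp_of_log_first_integral hVmax.ne' hKm.ne' (hpos t ht) hA₀ hlog⟩

/-- Separation of variables for the drug-amount equation `Ȧ = -V_max A/(K_m + A/V)`:
if `A(t₀) = A₀` and `A` is positive and satisfies the ODE on `[t₀, t₁]`, then for all
`t ∈ [t₀, t₁]`, `(K_m/V_max)(ln A(t) - ln A₀) + (A(t) - A₀)/(V_max V) = -(t - t₀)`,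
equivalently `A(t) = A₀ exp(-(A(t) - A₀)/(K_m V) - (V_max/K_m)(t - t₀))`. -/
theorem drug_amount_implicit_solution (Vmax Km V A₀ : ℝ)
    (hVmax : 0 < Vmax) (hKm : 0 < Km) (hV : 0 < V) (hA₀ : 0 < A₀)
    (t₀ t₁ : ℝ) (ht : t₀ ≤ t₁) (A : ℝ → ℝ)
    (hinit : A t₀ = A₀)
    (hpos : ∀ t ∈ Set.Icc t₀ t₁, 0 < A t)
    (hode : ∀ t ∈ Set.Icc t₀ t₁,
      HasDerivAt A (-(Vmax * A t) / (Km + A t / V)) t) :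
    ∀ t ∈ Set.Icc t₀ t₁,
      (Km / Vmax) * (Real.log (A t) - Real.log A₀) + (A t - A₀) / (Vmax * V) =
          -(t - t₀) ∧
      A t = A₀ * Real.exp (-(A t - A₀) / (Km * V) - (Vmax / Km) * (t - t₀)) :=
  drug_amount_implicit_solution_general Vmax Km V A₀ hVmax hKm hV t₀ t₁ A hinit hpos hode
end
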